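/- Let A be a Hermitian matrix with ‖A‖ ≤ 1 and rank at most r, with eigenvalues λⱼ. Let δ, ε > 0 and let P be a polynomial satisfying |P(x)| ≤ 1 for all x ∈ [−1,1] and |sgn(x) − P(x)| ≤ ε for all x ∈ [−1,1] with |x| > δ. Then |Tr(sgn(A)·A) − Tr(P(A)·A)| ≤ ε·Tr|A| + 2rδ ≤ ε·Tr|A| + 2rδ. -/

import Mathlib

open Matrix ComplexOrder
open scoped Matrix.Norms.L2Operator Kronecker

noncomputable section

variable {m : Type*} [Fintype m] [DecidableEq m]

/-- The square root of a positive semidefinite matrix (the definition of the older Mathlib). -/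
def Matrix.PosSemidef.sqrt {n 𝕜 : Type*} [Fintype n] [DecidableEq n] [RCLike 𝕜]
    {A : Matrix n n 𝕜} (hA : A.PosSemidef) : Matrix n n 𝕜 :=
  hA.1.eigenvectorUnitary.1 * diagonal ((↑) ∘ (√·) ∘ hA.1.eigenvalues) *
    (star hA.1.eigenvectorUnitary : Matrix n n 𝕜)

/-- A density matrix: positive semidefinite with unit trace. -/
def IsDensity (ρ : Matrix m m ℂ) : Prop := ρ.PosSemidef ∧ ρ.trace = 1

/-- The trace norm `‖A‖₁ = Tr √(AᴴA)`. -/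
def traceNorm (A : Matrix m m ℂ) : ℝ :=
  ((Matrix.posSemidef_conjTranspose_mul_self A).sqrt).trace.re

/-- The trace distance `T(ρ,σ) = ‖ρ − σ‖₁ / 2`. -/
def traceDist (ρ σ : Matrix m m ℂ) : ℝ := traceNorm (ρ - σ) / 2

/-- The fidelity `F(ρ,σ) = ‖√ρ √σ‖₁`. -/
def fid {ρ σ : Matrix m m ℂ} (hρ : ρ.PosSemidef) (hσ : σ.PosSemidef) : ℝ :=
  traceNorm (hρ.sqrt * hσ.sqrt)

/-- The sign function applied to a Hermitian matrix via its spectral decomposition. -/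
def signMat {A : Matrix m m ℂ} (hA : A.IsHermitian) : Matrix m m ℂ :=
  hA.cfc (fun x => Real.sign x)

/-- The outer product `|ψ⟩⟨φ|`. -/
def outer (ψ φ : m → ℂ) : Matrix m m ℂ := Matrix.vecMulVec ψ (star φ)

variable {α β : Type*} [Fintype α] [DecidableEq α] [Fintype β] [DecidableEq β]

/-- Partial trace over the first (A) factor. -/
def ptraceA (M : Matrix (α × β) (α × β) ℂ) : Matrix β β ℂ :=
  Matrix.of fun r r' => ∑ a, M (a, r) (a, r')

/-- Partial trace over the second (R) factor. -/
def ptraceR (M : Matrix (α × β) (α × β) ℂ) : Matrix α α ℂ :=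
  Matrix.of fun a a' => ∑ r, M (a, r) (a', r)


section helpers
variable {m : Type*} [Fintype m] [DecidableEq m]

lemma eq_sqrt_of_sq_eq' {n 𝕜 : Type*} [Fintype n] [DecidableEq n] [RCLike 𝕜]
    {B : Matrix n n 𝕜} (hB : B.PosSemidef) {A : Matrix n n 𝕜} (hA : A.PosSemidef)
    (h : B ^ 2 = A) : B = hA.sqrt := by
  open scoped MatrixOrder in
  have e : hA.sqrt = CFC.sqrt A := by
    rw [CFC.sqrt_eq_cfc, cfc_nnreal_eq_real _ A hA.nonneg, hA.1.cfc_eq]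
    rw [Matrix.PosSemidef.sqrt, Matrix.IsHermitian.cfc, Unitary.conjStarAlgAut_apply]
    congr 3
    funext i
    simp only [Function.comp_apply, Real.sqrt]
  open scoped MatrixOrder in
  rw [e, eq_comm, CFC.sqrt_eq_iff A B hA.nonneg hB.nonneg, ← sq, h]

lemma cfc_mul_cfc_trace' {A : Matrix m m ℂ} (hA : A.IsHermitian) (f g : ℝ → ℝ) :
    (hA.cfc f * hA.cfc g).trace = ∑ j, ((f (hA.eigenvalues j) * g (hA.eigenvalues j) : ℝ) : ℂ) := by
  set U : Matrix m m ℂ := (hA.eigenvectorUnitary : Matrix m m ℂ)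
  have hU : star U * U = 1 := (Matrix.mem_unitaryGroup_iff').mp hA.eigenvectorUnitary.2
  rw [Matrix.IsHermitian.cfc, Matrix.IsHermitian.cfc, Unitary.conjStarAlgAut_apply,
    Unitary.conjStarAlgAut_apply]
  rw [show (U * diagonal (RCLike.ofReal ∘ f ∘ hA.eigenvalues) * star U) *
      (U * diagonal (RCLike.ofReal ∘ g ∘ hA.eigenvalues) * star U)
      = U * (diagonal (RCLike.ofReal ∘ f ∘ hA.eigenvalues)
        * diagonal (RCLike.ofReal ∘ g ∘ hA.eigenvalues)) * star U by
    simp only [mul_assoc]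
    rw [← mul_assoc (star U) U, hU, one_mul]]
  rw [Matrix.trace_mul_cycle, ← mul_assoc, hU, one_mul, diagonal_mul_diagonal, trace_diagonal]
  simp [Function.comp]

lemma mcfc_id {A : Matrix m m ℂ} (hA : A.IsHermitian) : hA.cfc (fun x => x) = A := by
  rw [Matrix.IsHermitian.cfc]
  exact hA.spectral_theorem.symm

lemma mcfc_posSemidef {A : Matrix m m ℂ} (hA : A.IsHermitian) {f : ℝ → ℝ}
    (hf : ∀ x, 0 ≤ f x) : (hA.cfc f).PosSemidef := by
  rw [Matrix.IsHermitian.cfc]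
  exact Matrix.PosSemidef.mul_mul_conjTranspose_same
    (Matrix.posSemidef_diagonal_iff.mpr fun i => by
      simpa using Complex.zero_le_real.mpr (hf _)) _

lemma mcfc_mul_cfc_eq {A : Matrix m m ℂ} (hA : A.IsHermitian) (f g h : ℝ → ℝ)
    (hfg : ∀ x, f x * g x = h x) : hA.cfc f * hA.cfc g = hA.cfc h := by
  set U : Matrix m m ℂ := (hA.eigenvectorUnitary : Matrix m m ℂ)
  have hU : star U * U = 1 := (Matrix.mem_unitaryGroup_iff').mp hA.eigenvectorUnitary.2
  rw [Matrix.IsHermitian.cfc, Matrix.IsHermitian.cfc, Matrix.IsHermitian.cfc,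
    Unitary.conjStarAlgAut_apply, Unitary.conjStarAlgAut_apply, Unitary.conjStarAlgAut_apply]
  simp only [mul_assoc]
  rw [← mul_assoc (star U) U, hU, one_mul,
    ← mul_assoc (diagonal (RCLike.ofReal ∘ f ∘ hA.eigenvalues)), diagonal_mul_diagonal]
  congr 2
  ext i j
  simp [Matrix.diagonal_apply, ← Complex.ofReal_mul, hfg]

lemma msqrt_eq_cfc_abs {A : Matrix m m ℂ} (hA : A.IsHermitian) :
    (Matrix.posSemidef_conjTranspose_mul_self A).sqrt = hA.cfc (fun x => |x|) := by
  symm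
  apply eq_sqrt_of_sq_eq' (mcfc_posSemidef hA fun x => abs_nonneg x)
  rw [pow_two, mcfc_mul_cfc_eq hA _ _ (fun x => x * x) (fun x => by rw [abs_mul_abs_self]),
    ← mcfc_mul_cfc_eq hA (fun x => x) (fun x => x) _ (fun _ => rfl), mcfc_id hA, hA.eq]

lemma mtraceNorm_eq_sum {A : Matrix m m ℂ} (hA : A.IsHermitian) :
    traceNorm A = ∑ j, |hA.eigenvalues j| := by
  rw [traceNorm, msqrt_eq_cfc_abs hA,
    show hA.cfc (fun x => |x|) = hA.cfc (fun x => |x|) * hA.cfc (fun _ => 1) by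
      rw [mcfc_mul_cfc_eq hA _ _ (fun x => |x|) (fun x => by ring)],
    cfc_mul_cfc_trace']
  push_cast
  simp

lemma meig_abs_le {A : Matrix m m ℂ} (hA : A.IsHermitian) (hnorm : ‖A‖ ≤ 1) (j : m) :
    |hA.eigenvalues j| ≤ 1 := by
  have : Nonempty m := ⟨j⟩
  have h := spectrum.norm_le_norm_of_mem (hA.eigenvalues_mem_spectrum_real j)
  rw [Real.norm_eq_abs] at h
  exact h.trans hnorm

end helpers

/-- polynomial-approximation error bound for the sign function
applied to a low-rank Hermitian contraction:
`|Tr(sgn(A)·A) − Tr(P(A)·A)| ≤ ε·Tr|A| + 2rδ`. -/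
theorem sign_poly_trace_error
    {A : Matrix m m ℂ} (hA : A.IsHermitian) (hnorm : ‖A‖ ≤ 1)
    {r : ℕ} (hrank : A.rank ≤ r)
    {δ ε : ℝ} (hδ : 0 < δ) (hε : 0 < ε) (P : Polynomial ℝ)
    (hPb : ∀ x ∈ Set.Icc (-1 : ℝ) 1, |P.eval x| ≤ 1)
    (hPs : ∀ x ∈ Set.Icc (-1 : ℝ) 1, δ < |x| → |Real.sign x - P.eval x| ≤ ε) :
    |(signMat hA * A).trace.re - (hA.cfc (fun x => P.eval x) * A).trace.re|
      ≤ ε * traceNorm A + 2 * r * δ := by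
  classical
  set lam := hA.eigenvalues with hlam
  have hmem : ∀ j, lam j ∈ Set.Icc (-1:ℝ) 1 := fun j => abs_le.mp (meig_abs_le hA hnorm j)
  have key : ∀ f : ℝ → ℝ, (hA.cfc f * A).trace.re = ∑ j, f (lam j) * lam j := by
    intro f
    rw [show hA.cfc f * A = hA.cfc f * hA.cfc (fun x => x) from by rw [mcfc_id],
      cfc_mul_cfc_trace']
    simp
    rfl
  rw [signMat, key, key, ← Finset.sum_sub_distrib]
  have hsign : ∀ x : ℝ, |Real.sign x| ≤ 1 := by
    intro x
    rcases Real.sign_apply_eq x with h | h | h <;> rw [h] <;> norm_num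
  set S := Finset.univ.filter (fun j => lam j ≠ 0 ∧ |lam j| ≤ δ) with hS
  have hterm : ∀ j, |Real.sign (lam j) * lam j - P.eval (lam j) * lam j|
      ≤ ε * |lam j| + (if j ∈ S then 2 * δ else 0) := by
    intro j
    rw [show Real.sign (lam j) * lam j - P.eval (lam j) * lam j
        = (Real.sign (lam j) - P.eval (lam j)) * lam j from by ring, abs_mul]
    by_cases hj : j ∈ S
    · obtain ⟨h1, h2⟩ := (Finset.mem_filter.mp hj).2
      rw [if_pos hj]
      have : |Real.sign (lam j) - P.eval (lam j)| * |lam j| ≤ 2 * δ := by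
        apply mul_le_mul _ h2 (abs_nonneg _) (by norm_num)
        calc |Real.sign (lam j) - P.eval (lam j)|
            ≤ |Real.sign (lam j)| + |P.eval (lam j)| := abs_sub _ _
          _ ≤ 1 + 1 := add_le_add (hsign _) (hPb _ (hmem j))
          _ = 2 := by norm_num
      have h0 : 0 ≤ ε * |lam j| := by positivity
      linarith
    · rw [if_neg hj, add_zero]
      by_cases h0 : lam j = 0
      · simp [h0]
      · have hδ' : δ < |lam j| := by
          by_contra hle
          exact hj (Finset.mem_filter.mpr ⟨Finset.mem_univ _, h0, not_lt.mp hle⟩)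
        exact mul_le_mul_of_nonneg_right (hPs _ (hmem j) hδ') (abs_nonneg _)
  have hcard : S.card ≤ r := by
    calc S.card ≤ (Finset.univ.filter (fun j => lam j ≠ 0)).card := by
          apply Finset.card_le_card
          intro j hj
          exact Finset.mem_filter.mpr ⟨Finset.mem_univ _, (Finset.mem_filter.mp hj).2.1⟩
      _ = Fintype.card {i // lam i ≠ 0} := (Fintype.card_subtype _).symm
      _ = A.rank := hA.rank_eq_card_non_zero_eigs.symm
      _ ≤ r := hrank
  calc |∑ j, (Real.sign (lam j) * lam j - P.eval (lam j) * lam j)|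
      ≤ ∑ j, |Real.sign (lam j) * lam j - P.eval (lam j) * lam j| :=
        Finset.abs_sum_le_sum_abs _ _
    _ ≤ ∑ j, (ε * |lam j| + (if j ∈ S then 2 * δ else 0)) :=
        Finset.sum_le_sum fun j _ => hterm j
    _ = ε * (∑ j, |lam j|) + S.card * (2 * δ) := by
        rw [Finset.sum_add_distrib, Finset.mul_sum, Finset.sum_ite_mem,
          Finset.univ_inter, Finset.sum_const, nsmul_eq_mul]
    _ ≤ ε * traceNorm A + 2 * r * δ := by
        rw [mtraceNorm_eq_sum hA]
        have : (S.card : ℝ) * (2 * δ) ≤ 2 * r * δ := by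
          have : (S.card : ℝ) ≤ r := Nat.cast_le.mpr hcard
          nlinarith
        linarith
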